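/- Uniform Birkhoff theorem: for algebras A and B of the same type, B ∈ HSP(A) with the natural clone homomorphism Clo(A) → Clo(B) uniformly continuous if and only if every finitely generated subalgebra of B belongs to HSP_fin(A). -/

import Mathlib

/-! Basic universal algebra over a signature. -/

structure Sig where
  ops : Type
  ar : ops → ℕ

structure Alg (σ : Sig) where
  carrier : Type
  interp : ∀ o : σ.ops, (Fin (σ.ar o) → carrier) → carrier

/-- Terms over the variables `x₁, …, xₙ` (represented by `Fin n`). -/
inductive Tm (σ : Sig) (n : ℕ) : Type where
  | var : Fin n → Tm σ n
  | app : (o : σ.ops) → (Fin (σ.ar o) → Tm σ n) → Tm σ n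

/-- Evaluation of a term in an algebra (the map `ν^A_n`). -/
def evalTm {σ : Sig} (A : Alg σ) {n : ℕ} : Tm σ n → (Fin n → A.carrier) → A.carrier
  | .var i, a => a i
  | .app o ts, a => A.interp o fun j => evalTm A (ts j) a

/-- The set `Clo_n(A)` of `n`-ary term operations of `A`. -/
def CloSet {σ : Sig} (A : Alg σ) (n : ℕ) : Set ((Fin n → A.carrier) → A.carrier) :=
  Set.range fun t : Tm σ n => evalTm A t

def IsSubalg {σ : Sig} (A : Alg σ) (s : Set A.carrier) : Prop :=
  ∀ o : σ.ops, ∀ x : Fin (σ.ar o) → A.carrier, (∀ i, x i ∈ s) → A.interp o x ∈ s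

/-- The algebra structure on a subalgebra. -/
def subAlg {σ : Sig} (A : Alg σ) (s : Set A.carrier) (hs : IsSubalg A s) : Alg σ where
  carrier := s
  interp o x := ⟨A.interp o fun i => (x i : A.carrier), hs o _ fun i => (x i).2⟩

def IsHom {σ : Sig} (A B : Alg σ) (h : A.carrier → B.carrier) : Prop :=
  ∀ o x, h (A.interp o x) = B.interp o fun i => h (x i)

/-- Direct power `A^I`. -/
def powAlg {σ : Sig} (A : Alg σ) (I : Type) : Alg σ where
  carrier := I → A.carrier
  interp o x i := A.interp o fun j => x j i

/-- Product of a family of algebras. -/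
def prodAlg {σ : Sig} {I : Type} (f : I → Alg σ) : Alg σ where
  carrier := ∀ i, (f i).carrier
  interp o x i := (f i).interp o fun j => x j i

/-- The subuniverse generated by a subset. -/
def genSet {σ : Sig} (A : Alg σ) (g : Set A.carrier) : Set A.carrier :=
  ⋂₀ {s | IsSubalg A s ∧ g ⊆ s}

lemma genSet_isSubalg {σ : Sig} (A : Alg σ) (g : Set A.carrier) :
    IsSubalg A (genSet A g) := by
  intro o x hx
  rw [genSet, Set.mem_sInter]
  intro s hs
  exact hs.1 o x fun i => Set.mem_sInter.mp (hx i) s hs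

/-- The subalgebra of `A` generated by finitely many elements `g 0, …, g (m-1)`. -/
def fgSub {σ : Sig} (A : Alg σ) (m : ℕ) (g : Fin m → A.carrier) : Alg σ :=
  subAlg A (genSet A (Set.range g)) (genSet_isSubalg A _)

/-- `B` is a homomorphic image of a subalgebra of a (possibly infinite) power of `A`. -/
def MemHSP {σ : Sig} (A B : Alg σ) : Prop :=
  ∃ (I : Type) (s : Set (powAlg A I).carrier) (hs : IsSubalg (powAlg A I) s)
    (h : (subAlg (powAlg A I) s hs).carrier → B.carrier),
      IsHom (subAlg (powAlg A I) s hs) B h ∧ Function.Surjective h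

/-- `B` is a homomorphic image of a subalgebra of a finite power of `A`. -/
def MemHSPfin {σ : Sig} (A B : Alg σ) : Prop :=
  ∃ (I : Type) (_ : Finite I) (s : Set (powAlg A I).carrier) (hs : IsSubalg (powAlg A I) s)
    (h : (subAlg (powAlg A I) s hs).carrier → B.carrier),
      IsHom (subAlg (powAlg A I) s hs) B h ∧ Function.Surjective h

/-- The uniformity of pointwise convergence on `X → Y`, `Y` discrete. -/
def ptUnif (X Y : Type) : UniformSpace (X → Y) :=
  @Pi.uniformSpace X (fun _ => Y) fun _ => ⊥

/-- The uniformity of pointwise convergence on `Clo_n(A)`. -/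
def cloUnif {σ : Sig} (A : Alg σ) (n : ℕ) : UniformSpace ↥(CloSet A n) :=
  (ptUnif (Fin n → A.carrier) A.carrier).comap Subtype.val

/-- `φ` is the natural clone homomorphism from `Clo(A)` to `Clo(B)`:
it sends the evaluation of each term in `A` to its evaluation in `B`
(in each arity `n ≥ 1`). -/
def IsNatHom {σ : Sig} (A B : Alg σ)
    (φ : ∀ n : ℕ, ↥(CloSet A (n + 1)) → ↥(CloSet B (n + 1))) : Prop :=
  ∀ (n : ℕ) (t : Tm σ (n + 1)), (φ n ⟨evalTm A t, ⟨t, rfl⟩⟩ : _).val = evalTm B t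

/-- Uniform continuity of a clone map, with respect to the uniformities of
pointwise convergence (equivalently, uniform continuity on the coproduct). -/
def NatUC {σ : Sig} (A B : Alg σ)
    (φ : ∀ n : ℕ, ↥(CloSet A (n + 1)) → ↥(CloSet B (n + 1))) : Prop :=
  ∀ n : ℕ, @UniformContinuous _ _ (cloUnif A (n + 1)) (cloUnif B (n + 1)) (φ n)

/-!
Both sides amount to local finite determination: for every finite tuple `g` over `B` there is a
finite set `F` of tuples over `A` such that any two terms agreeing on `F` agree at `g`. Uniform
continuity of the natural clone map is exactly this condition, read off the basic entourages of
pointwise convergence. If `F` determines `g`, then `t(π) ↦ t(g)` is a well-defined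
surjective homomorphism from the subalgebra of `A^F` generated by the coordinate tuples `π` onto
the subalgebra generated by `g`. The same construction with `g = id_B` and `F = B → A` puts `B`
into `HSP(A)`; that this `F` determines `id_B` is Birkhoff's transfer of identities, which holds
because an identity only involves finitely many elements of `B`.
-/

open Function Set Filter
open scoped Uniformity

/-- Terms over an arbitrary type of variables: presenting `B` itself needs `|B|` variables. -/
inductive Term (σ : Sig) (V : Type) : Type where
  | var : V → Term σ V
  | app : (o : σ.ops) → (Fin (σ.ar o) → Term σ V) → Term σ V

namespace Term

variable {σ : Sig} {V W : Type}

def eval (A : Alg σ) (a : V → A.carrier) : Term σ V → A.carrier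
  | var x => a x
  | app o ts => A.interp o fun j => (ts j).eval A a

def rename (ρ : V → W) : Term σ V → Term σ W
  | var x => var (ρ x)
  | app o ts => app o fun j => (ts j).rename ρ

def vars : Term σ V → Set V
  | var x => {x}
  | app _ ts => ⋃ j, (ts j).vars

theorem finite_vars (t : Term σ V) : t.vars.Finite := by
  induction t with
  | var x => exact finite_singleton x
  | app o ts ih => exact finite_iUnion ih

theorem eval_rename (A : Alg σ) (ρ : V → W) (a : W → A.carrier) (t : Term σ V) :
    (t.rename ρ).eval A a = t.eval A (a ∘ ρ) := by
  induction t with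
  | var x => rfl
  | app o ts ih => exact congrArg (A.interp o) (funext ih)

theorem eval_congr (A : Alg σ) {a b : V → A.carrier} {t : Term σ V} (h : EqOn a b t.vars) :
    t.eval A a = t.eval A b := by
  induction t with
  | var x => exact h rfl
  | app o ts ih =>
    exact congrArg (A.interp o) <| funext fun j =>
      ih j (h.mono (subset_iUnion (fun j => (ts j).vars) j))

theorem eval_mem {A : Alg σ} {s : Set A.carrier} (hs : IsSubalg A s) {a : V → A.carrier}
    {t : Term σ V} (h : ∀ v ∈ t.vars, a v ∈ s) : t.eval A a ∈ s := by
  induction t with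
  | var x => exact h x rfl
  | app o ts ih => exact hs o _ fun j => ih j fun v hv => h v (mem_iUnion_of_mem j hv)

theorem eval_hom {A C : Alg σ} {f : A.carrier → C.carrier} (hf : IsHom A C f)
    (a : V → A.carrier) (t : Term σ V) : f (t.eval A a) = t.eval C (f ∘ a) := by
  induction t with
  | var x => rfl
  | app o ts ih => exact (hf o _).trans (congrArg (C.interp o) (funext ih))

theorem eval_powAlg_apply (A : Alg σ) {I : Type} (x : V → (powAlg A I).carrier)
    (t : Term σ V) (i : I) : t.eval (powAlg A I) x i = t.eval A (fun v => x v i) := by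
  induction t with
  | var x => rfl
  | app o ts ih => exact congrArg (A.interp o) (funext ih)

theorem coe_eval_subAlg (A : Alg σ) {s : Set A.carrier} (hs : IsSubalg A s)
    (x : V → (subAlg A s hs).carrier) (t : Term σ V) :
    Subtype.val (t.eval (subAlg A s hs) x) = t.eval A (fun v => Subtype.val (x v)) := by
  induction t with
  | var x => rfl
  | app o ts ih => exact congrArg (A.interp o) (funext ih)

def toTm {n : ℕ} : Term σ (Fin n) → Tm σ n
  | var i => .var i
  | app o ts => .app o fun j => (ts j).toTm

theorem evalTm_toTm (A : Alg σ) {n : ℕ} (t : Term σ (Fin n)) (a : Fin n → A.carrier) :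
    evalTm A t.toTm a = t.eval A a := by
  induction t with
  | var i => rfl
  | app o ts ih => exact congrArg (A.interp o) (funext ih)

end Term

def Tm.toTerm {σ : Sig} {n : ℕ} : Tm σ n → Term σ (Fin n)
  | .var i => .var i
  | .app o ts => .app o fun j => (ts j).toTerm

theorem Tm.eval_toTerm {σ : Sig} (A : Alg σ) {n : ℕ} (t : Tm σ n) (a : Fin n → A.carrier) :
    t.toTerm.eval A a = evalTm A t a := by
  induction t with
  | var i => rfl
  | app o ts ih => exact congrArg (A.interp o) (funext ih)

abbrev genSubAlg {σ : Sig} (A : Alg σ) (g : Set A.carrier) : Alg σ :=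
  subAlg A (genSet A g) (genSet_isSubalg A g)

def IsImageOfSubpower {σ : Sig} (A : Alg σ) (I : Type) (C : Alg σ) : Prop :=
  ∃ (s : Set (powAlg A I).carrier) (hs : IsSubalg (powAlg A I) s)
    (h : (subAlg (powAlg A I) s hs).carrier → C.carrier),
      IsHom (subAlg (powAlg A I) s hs) C h ∧ Surjective h

def DeterminedBy {σ : Sig} (A : Alg σ) {C : Alg σ} {V : Type} (F : Set (V → A.carrier))
    (c : V → C.carrier) : Prop :=
  ∀ t t' : Term σ V, (∀ a ∈ F, t.eval A a = t'.eval A a) → t.eval C c = t'.eval C c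

section

variable {σ : Sig} {A C : Alg σ} {V : Type}

theorem subset_genSet (A : Alg σ) (g : Set A.carrier) : g ⊆ genSet A g :=
  fun _ hx => mem_sInter.2 fun _ hs => hs.2 hx

theorem genSet_subset {g s : Set A.carrier} (hs : IsSubalg A s) (hg : g ⊆ s) :
    genSet A g ⊆ s :=
  fun _ hx => mem_sInter.1 hx s ⟨hs, hg⟩

theorem genSet_range_eq (A : Alg σ) (a : V → A.carrier) :
    genSet A (range a) = range fun t : Term σ V => t.eval A a := by
  refine (genSet_subset ?_ ?_).antisymm ?_
  · intro o x hx
    choose ts hts using hx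
    exact ⟨.app o ts, congrArg (A.interp o) (funext hts)⟩
  · rintro _ ⟨v, rfl⟩
    exact ⟨.var v, rfl⟩
  · rintro _ ⟨t, rfl⟩
    exact Term.eval_mem (genSet_isSubalg A _) fun v _ => subset_genSet A _ ⟨v, rfl⟩

theorem IsHom.comp {D : Alg σ} {f : A.carrier → C.carrier} {g : C.carrier → D.carrier}
    (hg : IsHom C D g) (hf : IsHom A C f) : IsHom A D (g ∘ f) := fun o x => by
  simp only [comp_apply, hf o x, hg o]

theorem exists_surjective_hom_genSubAlg {D : Alg σ} (d : V → D.carrier) (c : V → C.carrier)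
    (h : ∀ t t' : Term σ V, t.eval D d = t'.eval D d → t.eval C c = t'.eval C c) :
    ∃ f : (genSubAlg D (range d)).carrier → (genSubAlg C (range c)).carrier,
      IsHom _ _ f ∧ Surjective f := by
  have hD := genSet_range_eq D d
  have hC := genSet_range_eq C c
  choose rep hrep using fun x : (genSubAlg D (range d)).carrier => hD.subset x.2
  have hmem (t : Term σ V) : t.eval C c ∈ genSet C (range c) := hC.superset ⟨t, rfl⟩
  refine ⟨fun x => ⟨(rep x).eval C c, hmem _⟩, fun o x => Subtype.ext ?_, fun y => ?_⟩
  · refine h _ (.app o fun j => rep (x j)) ?_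
    exact (hrep _).trans (congrArg (D.interp o) (funext fun j => (hrep (x j)).symm))
  · obtain ⟨t, ht⟩ := hC.subset y.2
    have hx : t.eval D d ∈ genSet D (range d) := hD.superset ⟨t, rfl⟩
    exact ⟨⟨_, hx⟩, Subtype.ext ((h _ _ (hrep ⟨_, hx⟩)).trans ht)⟩

theorem IsImageOfSubpower.of_surjective {D : Alg σ} {I : Type} (hC : IsImageOfSubpower A I C)
    {f : C.carrier → D.carrier} (hf : IsHom C D f) (hsurj : Surjective f) :
    IsImageOfSubpower A I D := by
  obtain ⟨s, hs, h, hhom, hhsurj⟩ := hC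
  exact ⟨s, hs, f ∘ h, hf.comp hhom, hsurj.comp hhsurj⟩

theorem IsImageOfSubpower.exists_determinedBy {I : Type} (hC : IsImageOfSubpower A I C)
    (c : V → C.carrier) : ∃ a : I → V → A.carrier, DeterminedBy A (range a) c := by
  obtain ⟨s, hs, h, hhom, hsurj⟩ := hC
  refine ⟨fun i v => Subtype.val (surjInv hsurj (c v)) i, fun t t' ht => ?_⟩
  have hx : t.eval _ (surjInv hsurj ∘ c) = t'.eval _ (surjInv hsurj ∘ c) := by
    refine Subtype.ext (funext fun i => ?_)
    rw [Term.coe_eval_subAlg, Term.coe_eval_subAlg, Term.eval_powAlg_apply,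
      Term.eval_powAlg_apply]
    exact ht _ ⟨i, rfl⟩
  have hc : h ∘ surjInv hsurj ∘ c = c := funext fun v => rightInverse_surjInv hsurj (c v)
  rw [← hc, ← Term.eval_hom hhom, ← Term.eval_hom hhom, hx]

theorem DeterminedBy.isImageOfSubpower {F : Set (V → A.carrier)} {c : V → C.carrier}
    (h : DeterminedBy A F c) : IsImageOfSubpower A F (genSubAlg C (range c)) := by
  refine ⟨_, genSet_isSubalg _ _, exists_surjective_hom_genSubAlg (fun v a => a.1 v) c
    fun t t' htt' => h t t' fun a ha => ?_⟩
  have hcoord (t : Term σ V) := Term.eval_powAlg_apply A (fun v (a : F) => a.1 v) t ⟨a, ha⟩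
  exact (hcoord t).symm.trans ((congrFun htt' ⟨a, ha⟩).trans (hcoord t'))

theorem DeterminedBy.comp {W : Type} {F : Set (V → A.carrier)} {c : V → C.carrier}
    (h : DeterminedBy A F c) (ρ : W → V) : DeterminedBy A ((· ∘ ρ) '' F) (c ∘ ρ) := by
  intro t t' ht
  simpa only [Term.eval_rename] using
    h (t.rename ρ) (t'.rename ρ) fun a ha => by
      simpa only [Term.eval_rename] using ht (a ∘ ρ) (mem_image_of_mem _ ha)

theorem DeterminedBy.coe {F : Set (V → A.carrier)} {s : Set C.carrier} {hs : IsSubalg C s}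
    {c : V → (subAlg C s hs).carrier} (h : DeterminedBy A F c) :
    DeterminedBy A F fun v => Subtype.val (c v) := by
  intro t t' ht
  simpa only [Term.coe_eval_subAlg] using congrArg Subtype.val (h t t' ht)

theorem DeterminedBy.evalTm_eq {k : ℕ} {F : Set (Fin k → A.carrier)} {g : Fin k → C.carrier}
    (h : DeterminedBy A F g) {t t' : Tm σ k} (htt' : ∀ a ∈ F, evalTm A t a = evalTm A t' a) :
    evalTm C t g = evalTm C t' g := by
  simpa only [Tm.eval_toTerm] using
    h t.toTerm t'.toTerm fun a ha => by simpa only [Tm.eval_toTerm] using htt' a ha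

end

theorem cloUnif_hasBasis {σ : Sig} (A : Alg σ) (k : ℕ) :
    𝓤[cloUnif A k].HasBasis (fun F : Set (Fin k → A.carrier) => F.Finite)
      fun F => {pq | ∀ a ∈ F, pq.1.1 a = pq.2.1 a} := by
  have hpt : 𝓤[ptUnif (Fin k → A.carrier) A.carrier] =
      ⨅ a : Fin k → A.carrier, 𝓟 {pq | pq.1 a = pq.2 a} := by
    rw [ptUnif, @Pi.uniformity]
    simp only [bot_uniformity, comap_principal]
    rfl
  rw [cloUnif, uniformity_comap, hpt]
  convert (hasBasis_iInf_principal_finite _).comap (Prod.map Subtype.val Subtype.val) using 1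
  ext F pq
  simp

section

variable {σ : Sig} {A B : Alg σ}

theorem uniformContinuous_cloUnif_iff {k : ℕ} {f : CloSet A k → CloSet B k} :
    @UniformContinuous _ _ (cloUnif A k) (cloUnif B k) f ↔
      ∀ G : Set (Fin k → B.carrier), G.Finite → ∃ F : Set (Fin k → A.carrier), F.Finite ∧
        ∀ p q : CloSet A k, (∀ a ∈ F, p.1 a = q.1 a) → ∀ b ∈ G, (f p).1 b = (f q).1 b := by
  let := cloUnif A k
  let := cloUnif B k
  exact (cloUnif_hasBasis A k).uniformContinuous_iff (cloUnif_hasBasis B k)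

theorem exists_finite_determinedBy_of_natUC_succ
    {φ : ∀ n : ℕ, ↥(CloSet A (n + 1)) → ↥(CloSet B (n + 1))}
    (hnat : IsNatHom A B φ) (huc : NatUC A B φ) {n : ℕ} (g : Fin (n + 1) → B.carrier) :
    ∃ F : Set (Fin (n + 1) → A.carrier), F.Finite ∧ DeterminedBy A F g := by
  obtain ⟨F, hF, hFG⟩ := uniformContinuous_cloUnif_iff.1 (huc n) {g} (finite_singleton g)
  refine ⟨F, hF, fun t t' h => ?_⟩
  have hφ := hFG ⟨_, t.toTm, rfl⟩ ⟨_, t'.toTm, rfl⟩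
    (fun a ha => by simpa only [Term.evalTm_toTm] using h a ha) g rfl
  rwa [hnat, hnat, Term.evalTm_toTm, Term.evalTm_toTm] at hφ

theorem exists_finite_determinedBy_of_natUC
    {φ : ∀ n : ℕ, ↥(CloSet A (n + 1)) → ↥(CloSet B (n + 1))}
    (hnat : IsNatHom A B φ) (huc : NatUC A B φ) {m : ℕ} (g : Fin m → B.carrier) :
    ∃ F : Set (Fin m → A.carrier), F.Finite ∧ DeterminedBy A F g := by
  cases m with
  | succ n => exact exists_finite_determinedBy_of_natUC_succ hnat huc g
  | zero =>
    rcases isEmpty_or_nonempty B.carrier with hB | ⟨⟨b⟩⟩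
    · exact ⟨∅, finite_empty, fun t _ _ => isEmptyElim (t.eval B g)⟩
    · obtain ⟨F, hF, h⟩ := exists_finite_determinedBy_of_natUC_succ hnat huc fun _ : Fin 1 => b
      rw [Subsingleton.elim g ((fun _ : Fin 1 => b) ∘ Fin.elim0)]
      exact ⟨_, hF.image _, h.comp Fin.elim0⟩

theorem memHSPfin_genSubAlg_of_finite
    (hR : ∀ (m : ℕ) (g : Fin m → B.carrier), MemHSPfin A (fgSub B m g))
    {S : Set B.carrier} (hS : S.Finite) : MemHSPfin A (genSubAlg B S) := by
  obtain ⟨m, g, -, rfl⟩ := hS.fin_param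
  exact hR m g

theorem exists_finite_determinedBy_of_forall_memHSPfin
    (hR : ∀ (m : ℕ) (g : Fin m → B.carrier), MemHSPfin A (fgSub B m g))
    {V : Type} [Finite V] (c : V → B.carrier) :
    ∃ F : Set (V → A.carrier), F.Finite ∧ DeterminedBy A F c := by
  obtain ⟨I, hI, hC⟩ := memHSPfin_genSubAlg_of_finite hR (finite_range c)
  obtain ⟨a, ha⟩ := IsImageOfSubpower.exists_determinedBy (I := I) hC
    fun v => (⟨c v, subset_genSet _ _ ⟨v, rfl⟩⟩ : (genSubAlg B (range c)).carrier)
  exact ⟨range a, finite_range a, ha.coe⟩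

theorem determinedBy_univ_of_forall_memHSPfin
    (hR : ∀ (m : ℕ) (g : Fin m → B.carrier), MemHSPfin A (fgSub B m g))
    {V : Type} (c : V → B.carrier) : DeterminedBy A univ c := by
  classical
  intro t t' h
  set W := t.vars ∪ t'.vars
  obtain ⟨I, -, hC⟩ :=
    memHSPfin_genSubAlg_of_finite hR ((t.finite_vars.union t'.finite_vars).image c)
  have hW : ∀ v ∈ W, c v ∈ genSet B (c '' W) :=
    fun v hv => subset_genSet _ _ (mem_image_of_mem c hv)
  have ht : t.eval B c ∈ genSet B (c '' W) :=
    Term.eval_mem (genSet_isSubalg _ _) fun v hv => hW v (Or.inl hv)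
  -- `c` extended off `W` into the finitely generated subalgebra, which need not contain `c v`
  let d (v : V) : (genSubAlg B (c '' W)).carrier :=
    ⟨if v ∈ W then c v else t.eval B c, by split_ifs with hv; exacts [hW v hv, ht]⟩
  obtain ⟨a, ha⟩ := IsImageOfSubpower.exists_determinedBy (I := I) hC d
  have hd : EqOn (fun v => (d v).1) c W := fun v hv => if_pos hv
  calc t.eval B c = t.eval B (fun v => (d v).1) :=
        Term.eval_congr B (hd.symm.mono subset_union_left)
    _ = t'.eval B (fun v => (d v).1) := ha.coe t t' fun a _ => h a (mem_univ a)
    _ = t'.eval B c := Term.eval_congr B (hd.mono subset_union_right)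

theorem memHSP_of_forall_memHSPfin
    (hR : ∀ (m : ℕ) (g : Fin m → B.carrier), MemHSPfin A (fgSub B m g)) : MemHSP A B :=
  ⟨_, (determinedBy_univ_of_forall_memHSPfin hR id).isImageOfSubpower.of_surjective
    (f := Subtype.val) (fun _ _ => rfl) fun b => ⟨⟨b, subset_genSet _ _ ⟨b, rfl⟩⟩, rfl⟩⟩

variable (A B) in
noncomputable def cloMap (k : ℕ) (p : CloSet A k) : CloSet B k :=
  ⟨evalTm B p.2.choose, p.2.choose, rfl⟩

theorem isNatHom_cloMap (hR : ∀ (m : ℕ) (g : Fin m → B.carrier), MemHSPfin A (fgSub B m g)) :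
    IsNatHom A B fun n => cloMap A B (n + 1) := by
  intro n t
  have ht : ∃ t', evalTm A t' = evalTm A t := ⟨t, rfl⟩
  funext g
  exact (determinedBy_univ_of_forall_memHSPfin hR g).evalTm_eq
    fun a _ => congrFun ht.choose_spec a

theorem uniformContinuous_cloMap
    (hR : ∀ (m : ℕ) (g : Fin m → B.carrier), MemHSPfin A (fgSub B m g)) (k : ℕ) :
    @UniformContinuous _ _ (cloUnif A k) (cloUnif B k) (cloMap A B k) := by
  refine uniformContinuous_cloUnif_iff.2 fun G hG => ?_
  choose F hF hdet using fun g : Fin k → B.carrier =>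
    exists_finite_determinedBy_of_forall_memHSPfin (A := A) hR g
  refine ⟨⋃ g ∈ G, F g, hG.biUnion fun g _ => hF g, fun p q hpq g hg => ?_⟩
  refine (hdet g).evalTm_eq fun a ha => ?_
  exact (congrFun p.2.choose_spec a).trans
    ((hpq a (mem_biUnion hg ha)).trans (congrFun q.2.choose_spec a).symm)

end

/-- Uniform Birkhoff theorem: `B ∈ HSP(A)` with the natural clone homomorphism
`Clo(A) → Clo(B)` uniformly continuous if and only if every finitely generated
subalgebra of `B` belongs to `HSP_fin(A)`. -/
theorem stmt_10 {σ : Sig} (A B : Alg σ) :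
    (MemHSP A B ∧ ∃ φ : ∀ n : ℕ, ↥(CloSet A (n + 1)) → ↥(CloSet B (n + 1)),
        IsNatHom A B φ ∧ NatUC A B φ) ↔
      ∀ (m : ℕ) (g : Fin m → B.carrier), MemHSPfin A (fgSub B m g) := by
  constructor
  · rintro ⟨-, φ, hnat, huc⟩ m g
    obtain ⟨F, hF, h⟩ := exists_finite_determinedBy_of_natUC hnat huc g
    exact ⟨F, hF.to_subtype, h.isImageOfSubpower⟩
  · intro hR
    exact ⟨memHSP_of_forall_memHSPfin hR, _, isNatHom_cloMap hR,
      fun n => uniformContinuous_cloMap hR (n + 1)⟩
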